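/- Let f : [0,∞) → [0,∞) be C¹ and nondecreasing. The induced map on monotone bead distributions, sending (a₁, a₁+a₂, …, a₁+⋯+aₙ) to (f(a₁), f(a₁)+f(a₂), …, f(a₁)+⋯+f(aₙ)) for 0 ≤ a₁ ≤ ⋯ ≤ aₙ, preserves the componentwise partial order ≤ (on partial sums) if and only if f is concave (f′ nonincreasing). -/

import Mathlib

/-!
If `f` is concave, sum the tangent inequalities `f (aᵢ) ≤ f (bᵢ) + f' (bᵢ) (aᵢ - bᵢ)`: since `b` is
nondecreasing and `f` is concave and monotone, the slopes `f' (bᵢ)` are nonnegative and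
nonincreasing, so Abel summation against the nonnegative partial sums of `bᵢ - aᵢ` finishes.
Conversely, the two-bead pair `(x, y + h) ≤ (x + h, y)` gives `f (y + h) - f y ≤ f (x + h) - f x`
whenever `x + h ≤ y`; letting `h → 0⁺` shows that `f'` is nonincreasing.
-/

open Finset Filter Topology

/-- Monotonicity of `𝒯_f` on `ℬₙ`, with bead distributions given by their gap sequences. -/
def InducedMapMonotone (f : ℝ → ℝ) : Prop :=
  ∀ (n : ℕ) (a b : ℕ → ℝ),
    (∀ i, i < n → 0 ≤ a i) → (∀ i, i < n → 0 ≤ b i) →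
    (∀ i, i + 1 < n → a i ≤ a (i + 1)) → (∀ i, i + 1 < n → b i ≤ b (i + 1)) →
    (∀ k, k ≤ n → ∑ i ∈ range k, a i ≤ ∑ i ∈ range k, b i) →
    ∀ k, k ≤ n → ∑ i ∈ range k, f (a i) ≤ ∑ i ∈ range k, f (b i)

theorem monotoneOn_Iio_of_le_add_one {β : Type*} [Preorder β] {n : ℕ} {b : ℕ → β}
    (hb : ∀ i, i + 1 < n → b i ≤ b (i + 1)) : MonotoneOn b (Set.Iio n) :=
  monotoneOn_of_le_succ Set.ordConnected_Iio fun i _ _ hi => hb i hi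

theorem Finset.sum_range_mul_nonneg_of_antitoneOn {R : Type*} [CommRing R] [PartialOrder R]
    [IsOrderedRing R] {k : ℕ} {g d : ℕ → R} (hg : ∀ i < k, 0 ≤ g i)
    (hanti : AntitoneOn g (Set.Iio k)) (hd : ∀ j ≤ k, 0 ≤ ∑ i ∈ range j, d i) :
    0 ≤ ∑ i ∈ range k, g i * d i := by
  rcases k.eq_zero_or_pos with rfl | hk
  · simp
  have hparts := sum_range_by_parts g d k
  simp only [smul_eq_mul] at hparts
  rw [hparts, sub_nonneg]
  calc ∑ i ∈ range (k - 1), (g (i + 1) - g i) * ∑ j ∈ range (i + 1), d j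
      ≤ 0 := sum_nonpos fun i hi => by
        have hi : i + 1 < k := by rw [mem_range] at hi; omega
        exact mul_nonpos_of_nonpos_of_nonneg
          (sub_nonpos.mpr (hanti (Set.mem_Iio.mpr (by omega)) hi (by omega))) (hd _ hi.le)
    _ ≤ g (k - 1) * ∑ i ∈ range k, d i := mul_nonneg (hg _ (by omega)) (hd k le_rfl)

theorem ConcaveOn.le_add_derivWithin_mul_sub {S : Set ℝ} {f : ℝ → ℝ} (hfc : ConcaveOn ℝ S f)
    {x y : ℝ} (hx : x ∈ S) (hy : y ∈ S) (hfd : DifferentiableWithinAt ℝ f S y) :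
    f x ≤ f y + derivWithin f S y * (x - y) := by
  rcases lt_trichotomy x y with hxy | rfl | hxy
  · have := hfc.derivWithin_le_slope hx hy hxy hfd
    rw [slope_def_field, le_div_iff₀ (sub_pos.mpr hxy)] at this
    linarith
  · simp
  · have := hfc.slope_le_derivWithin hy hx hxy hfd
    rw [slope_def_field, div_le_iff₀ (sub_pos.mpr hxy)] at this
    linarith

theorem ConcaveOn.sum_range_le_sum_range {S : Set ℝ} {f : ℝ → ℝ} (hfc : ConcaveOn ℝ S f)
    (hfd : DifferentiableOn ℝ f S) (hmono : MonotoneOn f S) {k : ℕ} {a b : ℕ → ℝ}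
    (ha : ∀ i < k, a i ∈ S) (hb : ∀ i < k, b i ∈ S) (hbmono : MonotoneOn b (Set.Iio k))
    (hab : ∀ j ≤ k, ∑ i ∈ range j, a i ≤ ∑ i ∈ range j, b i) :
    ∑ i ∈ range k, f (a i) ≤ ∑ i ∈ range k, f (b i) := by
  set f' := derivWithin f S
  have habel : 0 ≤ ∑ i ∈ range k, f' (b i) * (b i - a i) := by
    refine sum_range_mul_nonneg_of_antitoneOn (fun i _ => hmono.derivWithin_nonneg)
      (fun i hi j hj hij => hfc.antitoneOn_derivWithin hfd (hb i hi) (hb j hj) (hbmono hi hj hij))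
      fun j hj => ?_
    rw [sum_sub_distrib, sub_nonneg]
    exact hab j hj
  have htangent : ∀ i ∈ range k, f (a i) ≤ f (b i) - f' (b i) * (b i - a i) := fun i hi => by
    have hi := mem_range.mp hi
    linarith [hfc.le_add_derivWithin_mul_sub (ha i hi) (hb i hi) (hfd _ (hb i hi))]
  calc ∑ i ∈ range k, f (a i)
      ≤ ∑ i ∈ range k, (f (b i) - f' (b i) * (b i - a i)) := sum_le_sum htangent
    _ = ∑ i ∈ range k, f (b i) - ∑ i ∈ range k, f' (b i) * (b i - a i) := sum_sub_distrib _ _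
    _ ≤ ∑ i ∈ range k, f (b i) := sub_le_self _ habel

theorem ConcaveOn.inducedMapMonotone {f : ℝ → ℝ} (hfc : ConcaveOn ℝ (Set.Ici 0) f)
    (hfd : DifferentiableOn ℝ f (Set.Ici 0)) (hmono : MonotoneOn f (Set.Ici 0)) :
    InducedMapMonotone f := by
  intro n a b ha hb _ hbmono hab k hk
  exact hfc.sum_range_le_sum_range hfd hmono (fun i hi => ha i (by omega))
    (fun i hi => hb i (by omega))
    ((monotoneOn_Iio_of_le_add_one hbmono).mono (Set.Iio_subset_Iio hk))
    fun j hj => hab j (hj.trans hk)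

theorem InducedMapMonotone.sub_le_sub {f : ℝ → ℝ} (H : InducedMapMonotone f) {x y h : ℝ}
    (hx : 0 ≤ x) (hh : 0 ≤ h) (hxy : x + h ≤ y) : f (y + h) - f y ≤ f (x + h) - f x := by
  have key := H 2 (fun i => if i = 0 then x else y + h) (fun i => if i = 0 then x + h else y)
    (fun i hi => by interval_cases i <;> simp <;> linarith)
    (fun i hi => by interval_cases i <;> simp <;> linarith)
    (fun i hi => by obtain rfl : i = 0 := by omega
                    simp only [↓reduceIte, zero_add, one_ne_zero]; linarith)
    (fun i hi => by obtain rfl : i = 0 := by omega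
                    simpa using hxy)
    (fun k hk => by interval_cases k <;> simp [sum_range_succ] <;> linarith)
    2 le_rfl
  simp only [sum_range_succ, range_one, sum_singleton, ↓reduceIte, one_ne_zero] at key
  linarith

theorem deriv_le_deriv_of_eventually_sub_le_sub {f : ℝ → ℝ} {x y : ℝ}
    (hx : DifferentiableAt ℝ f x) (hy : DifferentiableAt ℝ f y)
    (h : ∀ᶠ t in 𝓝[>] 0, f (y + t) - f y ≤ f (x + t) - f x) : deriv f y ≤ deriv f x := by
  refine le_of_tendsto_of_tendsto hy.hasDerivAt.tendsto_slope_zero_right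
    hx.hasDerivAt.tendsto_slope_zero_right ?_
  filter_upwards [h, self_mem_nhdsWithin] with t ht (htpos : 0 < t)
  exact smul_le_smul_of_nonneg_left ht (inv_nonneg.mpr htpos.le)

theorem InducedMapMonotone.concaveOn {f : ℝ → ℝ} (H : InducedMapMonotone f)
    (hfc : ContinuousOn f (Set.Ici 0)) (hfd : DifferentiableOn ℝ f (Set.Ioi 0)) :
    ConcaveOn ℝ (Set.Ici 0) f := by
  refine AntitoneOn.concaveOn_of_deriv (convex_Ici 0) hfc (by rwa [interior_Ici]) ?_
  rw [interior_Ici]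
  intro x hx y hy hxy
  rcases hxy.eq_or_lt with rfl | hxy
  · rfl
  refine deriv_le_deriv_of_eventually_sub_le_sub (hfd.differentiableAt (Ioi_mem_nhds hx))
    (hfd.differentiableAt (Ioi_mem_nhds hy)) ?_
  filter_upwards [Ioo_mem_nhdsGT (sub_pos.mpr hxy)] with t ht
  exact H.sub_le_sub hx.le ht.1.le (by linarith [ht.2])

theorem induced_map_monotone_iff_concave (f : ℝ → ℝ)
    (hf : ContDiffOn ℝ 1 f (Set.Ici (0 : ℝ)))
    (hmono : MonotoneOn f (Set.Ici (0 : ℝ))) :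
    (∀ (n : ℕ) (a b : ℕ → ℝ),
      (∀ i, i < n → 0 ≤ a i) → (∀ i, i < n → 0 ≤ b i) →
      (∀ i, i + 1 < n → a i ≤ a (i + 1)) → (∀ i, i + 1 < n → b i ≤ b (i + 1)) →
      (∀ k, k ≤ n → ∑ i ∈ Finset.range k, a i ≤ ∑ i ∈ Finset.range k, b i) →
      ∀ k, k ≤ n → ∑ i ∈ Finset.range k, f (a i) ≤ ∑ i ∈ Finset.range k, f (b i)) ↔
    ConcaveOn ℝ (Set.Ici (0 : ℝ)) f := by
  have hfd : DifferentiableOn ℝ f (Set.Ici 0) := hf.differentiableOn one_ne_zero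
  exact ⟨fun H => InducedMapMonotone.concaveOn H hf.continuousOn
      (hfd.mono Set.Ioi_subset_Ici_self),
    fun hfc => hfc.inducedMapMonotone hfd hmono⟩
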